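/- arXiv:2302.01126 — 4 statements merged into one kernel-verified Lean document; each statement's English description precedes it below -/
import Mathlib

section
/- Let G₁ and G₂ be graphs with disjoint vertex sets, x₁y₁ ∈ E(G₁), x₂y₂ ∈ E(G₂), with x₁ and x₂ not pendant vertices, and let G₃ = G₁(x₁y₁) +_H G₂(x₂y₂) be their Hajós sum. Then γ_st(G₃) ≤ γ_st(G₁) + γ_st(G₂) + 1. -/
/-- Degree of a vertex: number of neighbors. -/
noncomputable def deg {V : Type*} (G : SimpleGraph V) (v : V) : ℕ :=
  Nat.card (G.neighborSet v)

/-- `D` is a strong dominating set of `G`. -/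
def IsStrongDomSet {V : Type*} (G : SimpleGraph V) (D : Set V) : Prop :=
  ∀ x ∉ D, ∃ y ∈ D, G.Adj x y ∧ deg G x ≤ deg G y

/-- `D` is a dominating set of `G`. -/
def IsDomSet {V : Type*} (G : SimpleGraph V) (D : Set V) : Prop :=
  ∀ x ∉ D, ∃ y ∈ D, G.Adj x y

/-- The strong domination number. -/
noncomputable def gammaSt {V : Type*} (G : SimpleGraph V) : ℕ :=
  sInf {n | ∃ D : Set V, IsStrongDomSet G D ∧ D.ncard = n}

/-- The domination number. -/
noncomputable def gammaDom {V : Type*} (G : SimpleGraph V) : ℕ :=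
  sInf {n | ∃ D : Set V, IsDomSet G D ∧ D.ncard = n}

/-- Auxiliary graph on `V₁ ⊕ V₂` for the Hajós sum: delete the edges `x₁y₁`, `x₂y₂`,
redirect edges at `x₂` to `x₁` (which will be the identified vertex), add edge `y₁y₂`. -/
def hajosAux {V₁ V₂ : Type*} (G₁ : SimpleGraph V₁) (G₂ : SimpleGraph V₂)
    (x₁ y₁ : V₁) (x₂ y₂ : V₂) : SimpleGraph (V₁ ⊕ V₂) where
  Adj a b :=
    match a, b with
    | Sum.inl a, Sum.inl b =>
        G₁.Adj a b ∧ ¬(a = x₁ ∧ b = y₁) ∧ ¬(a = y₁ ∧ b = x₁)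
    | Sum.inr a, Sum.inr b =>
        G₂.Adj a b ∧ ¬(a = x₂ ∧ b = y₂) ∧ ¬(a = y₂ ∧ b = x₂)
    | Sum.inl a, Sum.inr b => (a = x₁ ∧ G₂.Adj x₂ b ∧ b ≠ y₂) ∨ (a = y₁ ∧ b = y₂)
    | Sum.inr a, Sum.inl b => (b = x₁ ∧ G₂.Adj x₂ a ∧ a ≠ y₂) ∨ (b = y₁ ∧ a = y₂)
  symm := by
    constructor
    rintro (a | a) (b | b) h <;> dsimp only at h ⊢
    · exact ⟨h.1.symm, fun hc => h.2.2 ⟨hc.2, hc.1⟩, fun hc => h.2.1 ⟨hc.2, hc.1⟩⟩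
    · exact h
    · exact h
    · exact ⟨h.1.symm, fun hc => h.2.2 ⟨hc.2, hc.1⟩, fun hc => h.2.1 ⟨hc.2, hc.1⟩⟩
  loopless := by
    constructor
    rintro (a | a) h <;> dsimp only at h
    · exact G₁.loopless.irrefl a h.1
    · exact G₂.loopless.irrefl a h.1

/-- The vertex set of the Hajós sum: everything except `x₂`, which is identified with `x₁`. -/
def hajosVerts {V₁ V₂ : Type*} (x₂ : V₂) : Set (V₁ ⊕ V₂) := {v | v ≠ Sum.inr x₂}

/-- The Hajós sum `G₁(x₁y₁) +_H G₂(x₂y₂)`. -/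
def hajosSum {V₁ V₂ : Type*} (G₁ : SimpleGraph V₁) (G₂ : SimpleGraph V₂)
    (x₁ y₁ : V₁) (x₂ y₂ : V₂) : SimpleGraph (hajosVerts (V₁ := V₁) x₂) :=
  (hajosAux G₁ G₂ x₁ y₁ x₂ y₂).induce (hajosVerts x₂)

/-- The identified vertex `v_H(x₁x₂)` of the Hajós sum. -/
def hajosVH {V₁ V₂ : Type*} (x₁ : V₁) (x₂ : V₂) : hajosVerts (V₁ := V₁) (V₂ := V₂) x₂ :=
  ⟨Sum.inl x₁, by simp [hajosVerts]⟩


section HajosAuxLemmas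

open Sum

variable {V₁ V₂ : Type*} [Fintype V₁] [Fintype V₂] (G₁ : SimpleGraph V₁) (G₂ : SimpleGraph V₂) (x₁ y₁ : V₁) (x₂ y₂ : V₂)

lemma deg_eq_ncard {V : Type*} (G : SimpleGraph V) (v : V) :
    deg G v = (G.neighborSet v).ncard := by
  rw [deg, Nat.card_coe_set_eq]

lemma mem_hv_inl (u : V₁) : (Sum.inl u : V₁ ⊕ V₂) ∈ hajosVerts x₂ := by simp [hajosVerts]

lemma mem_hv_inr {u : V₂} (h : u ≠ x₂) : (Sum.inr u : V₁ ⊕ V₂) ∈ hajosVerts (V₁ := V₁) x₂ := by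
  simp [hajosVerts, h]

lemma adj_H {a b : hajosVerts (V₁ := V₁) x₂} :
    (hajosSum G₁ G₂ x₁ y₁ x₂ y₂).Adj a b ↔ (hajosAux G₁ G₂ x₁ y₁ x₂ y₂).Adj a.val b.val :=
  Iff.rfl

lemma aux_adj_ll {a b : V₁} :
    (hajosAux G₁ G₂ x₁ y₁ x₂ y₂).Adj (inl a) (inl b) ↔
      G₁.Adj a b ∧ ¬(a = x₁ ∧ b = y₁) ∧ ¬(a = y₁ ∧ b = x₁) := Iff.rfl

lemma aux_adj_rr {a b : V₂} :
    (hajosAux G₁ G₂ x₁ y₁ x₂ y₂).Adj (inr a) (inr b) ↔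
      G₂.Adj a b ∧ ¬(a = x₂ ∧ b = y₂) ∧ ¬(a = y₂ ∧ b = x₂) := Iff.rfl

lemma aux_adj_lr {a : V₁} {b : V₂} :
    (hajosAux G₁ G₂ x₁ y₁ x₂ y₂).Adj (inl a) (inr b) ↔
      (a = x₁ ∧ G₂.Adj x₂ b ∧ b ≠ y₂) ∨ (a = y₁ ∧ b = y₂) := Iff.rfl

lemma aux_adj_rl {a : V₂} {b : V₁} :
    (hajosAux G₁ G₂ x₁ y₁ x₂ y₂).Adj (inr a) (inl b) ↔
      (b = x₁ ∧ G₂.Adj x₂ a ∧ a ≠ y₂) ∨ (b = y₁ ∧ a = y₂) := Iff.rfl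

lemma degH_inl (he₁ : G₁.Adj x₁ y₁) (he₂ : G₂.Adj x₂ y₂) {u : V₁} (hu : u ≠ x₁) :
    deg (hajosSum G₁ G₂ x₁ y₁ x₂ y₂) ⟨Sum.inl u, mem_hv_inl x₂ u⟩ = deg G₁ u := by
  classical
  set H := hajosSum G₁ G₂ x₁ y₁ x₂ y₂ with hH
  set f : V₁ → hajosVerts (V₁ := V₁) x₂ := fun b =>
    if u = y₁ ∧ b = x₁ then ⟨Sum.inr y₂, mem_hv_inr x₂ he₂.ne'⟩ else ⟨Sum.inl b, mem_hv_inl x₂ b⟩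
    with hf
  have himg : H.neighborSet ⟨Sum.inl u, mem_hv_inl x₂ u⟩ = f '' (G₁.neighborSet u) := by
    ext ⟨w, hw⟩
    rcases w with b | b
    · simp only [SimpleGraph.mem_neighborSet, Set.mem_image, hH, adj_H, aux_adj_ll]
      constructor
      · rintro ⟨h1, h2, h3⟩
        exact ⟨b, h1, by simp only [hf, if_neg h3]⟩
      · rintro ⟨c, hc, hfc⟩
        simp only [hf] at hfc
        by_cases hcase : u = y₁ ∧ c = x₁
        · rw [if_pos hcase] at hfc
          exact absurd (congrArg Subtype.val hfc) (by simp)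
        · rw [if_neg hcase] at hfc
          have hcb : c = b := by simpa using congrArg Subtype.val hfc
          subst hcb
          exact ⟨hc, fun hc2 => hu hc2.1, hcase⟩
    · simp only [SimpleGraph.mem_neighborSet, Set.mem_image, hH, adj_H, aux_adj_lr]
      constructor
      · rintro (⟨h1, _⟩ | ⟨h1, h2⟩)
        · exact absurd h1 hu
        · subst h1; subst h2
          exact ⟨x₁, he₁.symm, by simp [hf]⟩
      · rintro ⟨c, hc, hfc⟩
        simp only [hf] at hfc
        by_cases hcase : u = y₁ ∧ c = x₁
        · rw [if_pos hcase] at hfc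
          have : y₂ = b := by simpa using congrArg Subtype.val hfc
          exact Or.inr ⟨hcase.1, this.symm⟩
        · rw [if_neg hcase] at hfc
          exact absurd (congrArg Subtype.val hfc) (by simp)
  rw [deg_eq_ncard, deg_eq_ncard, himg]
  apply Set.ncard_image_of_injOn
  intro a ha c hc hfac
  simp only [hf] at hfac
  by_cases h1 : u = y₁ ∧ a = x₁ <;> by_cases h2 : u = y₁ ∧ c = x₁
  · rw [h1.2, h2.2]
  · rw [if_pos h1, if_neg h2] at hfac
    exact absurd (congrArg Subtype.val hfac) (by simp)
  · rw [if_neg h1, if_pos h2] at hfac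
    exact absurd (congrArg Subtype.val hfac) (by simp)
  · rw [if_neg h1, if_neg h2] at hfac
    simpa using congrArg Subtype.val hfac

lemma degH_inr (he₁ : G₁.Adj x₁ y₁) (he₂ : G₂.Adj x₂ y₂) {u : V₂} (hu : u ≠ x₂) :
    deg (hajosSum G₁ G₂ x₁ y₁ x₂ y₂) ⟨Sum.inr u, mem_hv_inr x₂ hu⟩ = deg G₂ u := by
  classical
  set H := hajosSum G₁ G₂ x₁ y₁ x₂ y₂ with hH
  set f : V₂ → hajosVerts (V₁ := V₁) x₂ := fun b =>
    if hb : b = x₂ then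
      (if u = y₂ then ⟨Sum.inl y₁, mem_hv_inl x₂ y₁⟩ else ⟨Sum.inl x₁, mem_hv_inl x₂ x₁⟩)
    else ⟨Sum.inr b, mem_hv_inr x₂ hb⟩ with hf
  have himg : H.neighborSet ⟨Sum.inr u, mem_hv_inr x₂ hu⟩ = f '' (G₂.neighborSet u) := by
    ext ⟨w, hw⟩
    rcases w with b | b
    · simp only [SimpleGraph.mem_neighborSet, Set.mem_image, hH, adj_H, aux_adj_rl]
      constructor
      · rintro (⟨h1, h2, h3⟩ | ⟨h1, h2⟩)
        · subst h1
          refine ⟨x₂, h2.symm, ?_⟩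
          simp only [hf, dif_pos rfl, if_neg h3]
        · subst h1; subst h2
          exact ⟨x₂, he₂.symm, by simp [hf]⟩
      · rintro ⟨c, hc, hfc⟩
        simp only [hf] at hfc
        by_cases hcase : c = x₂
        · subst hcase
          rw [dif_pos rfl] at hfc
          by_cases hu2 : u = y₂
          · rw [if_pos hu2] at hfc
            have : y₁ = b := by simpa using congrArg Subtype.val hfc
            exact Or.inr ⟨this.symm, hu2⟩
          · rw [if_neg hu2] at hfc
            have : x₁ = b := by simpa using congrArg Subtype.val hfc
            exact Or.inl ⟨this.symm, hc.symm, hu2⟩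
        · rw [dif_neg hcase] at hfc
          exact absurd (congrArg Subtype.val hfc) (by simp)
    · have hbx : b ≠ x₂ := fun h => hw (by rw [h])
      simp only [SimpleGraph.mem_neighborSet, Set.mem_image, hH, adj_H, aux_adj_rr]
      constructor
      · rintro ⟨h1, h2, h3⟩
        exact ⟨b, h1, by simp only [hf, dif_neg hbx]⟩
      · rintro ⟨c, hc, hfc⟩
        simp only [hf] at hfc
        by_cases hcase : c = x₂
        · subst hcase
          rw [dif_pos rfl] at hfc
          by_cases hu2 : u = y₂ <;> [rw [if_pos hu2] at hfc; rw [if_neg hu2] at hfc] <;>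
            exact absurd (congrArg Subtype.val hfc) (by simp)
        · rw [dif_neg hcase] at hfc
          have hcb : c = b := by simpa using congrArg Subtype.val hfc
          subst hcb
          exact ⟨hc, fun h => hu h.1, fun h => hcase h.2⟩
  rw [deg_eq_ncard, deg_eq_ncard, himg]
  apply Set.ncard_image_of_injOn
  intro a ha c hc hfac
  simp only [hf] at hfac
  by_cases h1 : a = x₂ <;> by_cases h2 : c = x₂
  · rw [h1, h2]
  · rw [dif_pos h1, dif_neg h2] at hfac
    by_cases hu2 : u = y₂ <;> [rw [if_pos hu2] at hfac; rw [if_neg hu2] at hfac] <;>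
      exact absurd (congrArg Subtype.val hfac) (by simp)
  · rw [dif_neg h1, dif_pos h2] at hfac
    by_cases hu2 : u = y₂ <;> [rw [if_pos hu2] at hfac; rw [if_neg hu2] at hfac] <;>
      exact absurd (congrArg Subtype.val hfac) (by simp)
  · rw [dif_neg h1, dif_neg h2] at hfac
    simpa using congrArg Subtype.val hfac

lemma degH_vH_ge₁ (he₁ : G₁.Adj x₁ y₁) (hd₂ : 2 ≤ deg G₂ x₂) :
    deg G₁ x₁ ≤ deg (hajosSum G₁ G₂ x₁ y₁ x₂ y₂) (hajosVH x₁ x₂) := by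
  classical
  obtain ⟨b₀, hb₀, hb₀ne⟩ : ∃ b ∈ G₂.neighborSet x₂, b ≠ y₂ := by
    apply Set.exists_ne_of_one_lt_ncard
    rw [← deg_eq_ncard]; omega
  rw [SimpleGraph.mem_neighborSet] at hb₀
  set f : V₁ → hajosVerts (V₁ := V₁) x₂ := fun b =>
    if b = y₁ then ⟨Sum.inr b₀, mem_hv_inr x₂ hb₀.ne'⟩ else ⟨Sum.inl b, mem_hv_inl x₂ b⟩ with hf
  rw [deg_eq_ncard, deg_eq_ncard]
  apply Set.ncard_le_ncard_of_injOn f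
  · intro b hb
    rw [SimpleGraph.mem_neighborSet] at hb
    simp only [hf]
    by_cases hby : b = y₁
    · rw [if_pos hby]
      rw [SimpleGraph.mem_neighborSet]
      exact (adj_H G₁ G₂ x₁ y₁ x₂ y₂).mpr (Or.inl ⟨rfl, hb₀, hb₀ne⟩)
    · rw [if_neg hby]
      rw [SimpleGraph.mem_neighborSet]
      exact (adj_H G₁ G₂ x₁ y₁ x₂ y₂).mpr
        ⟨hb, fun h => hby h.2, fun h => he₁.ne h.1⟩
  · intro a ha c hc hfac
    simp only [hf] at hfac
    by_cases h1 : a = y₁ <;> by_cases h2 : c = y₁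
    · rw [h1, h2]
    · rw [if_pos h1, if_neg h2] at hfac
      exact absurd (congrArg Subtype.val hfac) (by simp)
    · rw [if_neg h1, if_pos h2] at hfac
      exact absurd (congrArg Subtype.val hfac) (by simp)
    · rw [if_neg h1, if_neg h2] at hfac
      simpa using congrArg Subtype.val hfac

lemma degH_vH_ge₂ (he₁ : G₁.Adj x₁ y₁) (he₂ : G₂.Adj x₂ y₂) (hd₁ : 2 ≤ deg G₁ x₁) :
    deg G₂ x₂ ≤ deg (hajosSum G₁ G₂ x₁ y₁ x₂ y₂) (hajosVH x₁ x₂) := by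
  classical
  obtain ⟨a₀, ha₀, ha₀ne⟩ : ∃ a ∈ G₁.neighborSet x₁, a ≠ y₁ := by
    apply Set.exists_ne_of_one_lt_ncard
    rw [← deg_eq_ncard]; omega
  rw [SimpleGraph.mem_neighborSet] at ha₀
  set f : V₂ → hajosVerts (V₁ := V₁) x₂ := fun b =>
    if hb : b = y₂ then ⟨Sum.inl a₀, mem_hv_inl x₂ a₀⟩
    else if hb2 : b = x₂ then ⟨Sum.inl a₀, mem_hv_inl x₂ a₀⟩
    else ⟨Sum.inr b, mem_hv_inr x₂ hb2⟩ with hf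
  rw [deg_eq_ncard, deg_eq_ncard]
  apply Set.ncard_le_ncard_of_injOn f
  · intro b hb
    rw [SimpleGraph.mem_neighborSet] at hb
    have hbx : b ≠ x₂ := hb.ne'
    simp only [hf, dif_neg hbx]
    by_cases hby : b = y₂
    · rw [dif_pos hby]
      rw [SimpleGraph.mem_neighborSet]
      exact (adj_H G₁ G₂ x₁ y₁ x₂ y₂).mpr ⟨ha₀, fun h => ha₀ne h.2, fun h => he₁.ne h.1⟩
    · rw [dif_neg hby]
      rw [SimpleGraph.mem_neighborSet]
      exact (adj_H G₁ G₂ x₁ y₁ x₂ y₂).mpr (Or.inl ⟨rfl, hb, hby⟩)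
  · intro a ha c hc ;
    rw [SimpleGraph.mem_neighborSet] at ha hc
    intro hfac
    simp only [hf, dif_neg ha.ne', dif_neg hc.ne'] at hfac
    by_cases h1 : a = y₂ <;> by_cases h2 : c = y₂
    · rw [h1, h2]
    · rw [dif_pos h1, dif_neg h2] at hfac
      exact absurd (congrArg Subtype.val hfac) (by simp)
    · rw [dif_neg h1, dif_pos h2] at hfac
      exact absurd (congrArg Subtype.val hfac) (by simp)
    · rw [dif_neg h1, dif_neg h2] at hfac
      simpa using congrArg Subtype.val hfac

lemma gammaSt_exists {V : Type*} [Fintype V] (G : SimpleGraph V) :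
    ∃ D : Set V, IsStrongDomSet G D ∧ D.ncard = gammaSt G := by
  have hne : {n | ∃ D : Set V, IsStrongDomSet G D ∧ D.ncard = n}.Nonempty :=
    ⟨(Set.univ : Set V).ncard, Set.univ, fun x hx => absurd (Set.mem_univ x) hx, rfl⟩
  exact Nat.sInf_mem hne

end HajosAuxLemmas

/-- Upper bound for the strong domination number of the Hajós sum. -/
theorem stmt5 {V₁ V₂ : Type*} [Fintype V₁] [Fintype V₂]
    (G₁ : SimpleGraph V₁) (G₂ : SimpleGraph V₂) (x₁ y₁ : V₁) (x₂ y₂ : V₂)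
    (he₁ : G₁.Adj x₁ y₁) (he₂ : G₂.Adj x₂ y₂)
    (hx₁ : deg G₁ x₁ ≠ 1) (hx₂ : deg G₂ x₂ ≠ 1) :
    gammaSt (hajosSum G₁ G₂ x₁ y₁ x₂ y₂) ≤ gammaSt G₁ + gammaSt G₂ + 1 := by
  classical
  obtain ⟨D₁, hD₁, hc₁⟩ := gammaSt_exists G₁
  obtain ⟨D₂, hD₂, hc₂⟩ := gammaSt_exists G₂
  set H := hajosSum G₁ G₂ x₁ y₁ x₂ y₂ with hH
  have hd₁ : 2 ≤ deg G₁ x₁ := by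
    have h1 : 0 < deg G₁ x₁ := by
      rw [deg_eq_ncard]
      exact (Set.ncard_pos (Set.toFinite _)).mpr ⟨y₁, he₁⟩
    omega
  have hd₂ : 2 ≤ deg G₂ x₂ := by
    have h1 : 0 < deg G₂ x₂ := by
      rw [deg_eq_ncard]
      exact (Set.ncard_pos (Set.toFinite _)).mpr ⟨y₂, he₂⟩
    omega
  set A : Set (V₁ ⊕ V₂) :=
    insert (Sum.inl x₁) (Sum.inl '' D₁) ∪ (if x₁ ∈ D₁ then {Sum.inl y₁} else ∅) with hA
  set B : Set (V₁ ⊕ V₂) :=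
    Sum.inr '' (D₂ \ {x₂}) ∪ (if x₂ ∈ D₂ then {Sum.inr y₂} else ∅) with hB
  have hmemA0 : Sum.inl x₁ ∈ A ∪ B :=
    Set.mem_union_left _ (Set.mem_union_left _ (Set.mem_insert _ _))
  have hmemA1 : ∀ u : V₁, u ∈ D₁ → Sum.inl u ∈ A ∪ B := fun u hu =>
    Set.mem_union_left _ (Set.mem_union_left _ (Set.mem_insert_iff.mpr
      (Or.inr ⟨u, hu, rfl⟩)))
  have hmemA2 : x₁ ∈ D₁ → (Sum.inl y₁ : V₁ ⊕ V₂) ∈ A ∪ B := fun h =>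
    Set.mem_union_left _ (Set.mem_union_right _ (by rw [if_pos h]; exact rfl))
  have hmemB1 : ∀ u : V₂, u ∈ D₂ → u ≠ x₂ → (Sum.inr u : V₁ ⊕ V₂) ∈ A ∪ B := fun u hu hne =>
    Set.mem_union_right _ (Set.mem_union_left _ ⟨u, ⟨hu, by simp [hne]⟩, rfl⟩)
  have hmemB2 : x₂ ∈ D₂ → (Sum.inr y₂ : V₁ ⊕ V₂) ∈ A ∪ B := fun h =>
    Set.mem_union_right _ (Set.mem_union_right _ (by rw [if_pos h]; exact rfl))
  have hdom : IsStrongDomSet H (Subtype.val ⁻¹' (A ∪ B)) := by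
    rintro ⟨w, hw⟩ hnot
    have hnot' : w ∉ A ∪ B := fun h => hnot (Set.mem_preimage.mpr h)
    rcases w with u | u
    · have hu1 : u ∉ D₁ := fun h => hnot' (hmemA1 u h)
      have hux : u ≠ x₁ := fun h => hnot' (h ▸ hmemA0)
      obtain ⟨y, hyD, hadj, hdeg⟩ := hD₁ u hu1
      by_cases hbad : u = y₁ ∧ y = x₁
      · exact absurd (hbad.1 ▸ hmemA2 (hbad.2 ▸ hyD)) hnot'
      · refine ⟨⟨Sum.inl y, mem_hv_inl x₂ y⟩, Set.mem_preimage.mpr (hmemA1 y hyD), ?_, ?_⟩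
        · exact (adj_H G₁ G₂ x₁ y₁ x₂ y₂).mpr ⟨hadj, fun h => hux h.1, hbad⟩
        · have hdu : deg H ⟨Sum.inl u, hw⟩ = deg G₁ u :=
            degH_inl G₁ G₂ x₁ y₁ x₂ y₂ he₁ he₂ hux
          by_cases hyx : y = x₁
          · rw [hyx] at hdeg
            rw [hdu]
            have hvh : (⟨Sum.inl y, mem_hv_inl x₂ y⟩ : hajosVerts (V₁ := V₁) x₂)
                = hajosVH x₁ x₂ := Subtype.ext (by rw [hyx]; rfl)
            rw [hvh]
            exact le_trans hdeg (degH_vH_ge₁ G₁ G₂ x₁ y₁ x₂ y₂ he₁ hd₂)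
          · have hdy : deg H ⟨Sum.inl y, mem_hv_inl x₂ y⟩ = deg G₁ y :=
              degH_inl G₁ G₂ x₁ y₁ x₂ y₂ he₁ he₂ hyx
            rw [hdu, hdy]
            exact hdeg
    · have hux : u ≠ x₂ := fun h => hw (by rw [h])
      have hu2 : u ∉ D₂ := fun h => hnot' (hmemB1 u h hux)
      obtain ⟨y, hyD, hadj, hdeg⟩ := hD₂ u hu2
      have hdu : deg H ⟨Sum.inr u, hw⟩ = deg G₂ u :=
        degH_inr G₁ G₂ x₁ y₁ x₂ y₂ he₁ he₂ hux
      by_cases hyx : y = x₂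
      · rw [hyx] at hyD hadj hdeg
        have huy : u ≠ y₂ := fun h => hnot' (h ▸ hmemB2 hyD)
        refine ⟨⟨Sum.inl x₁, mem_hv_inl x₂ x₁⟩, Set.mem_preimage.mpr hmemA0, ?_, ?_⟩
        · exact (adj_H G₁ G₂ x₁ y₁ x₂ y₂).mpr (Or.inl ⟨rfl, hadj.symm, huy⟩)
        · rw [hdu]
          exact le_trans hdeg (degH_vH_ge₂ G₁ G₂ x₁ y₁ x₂ y₂ he₁ he₂ hd₁)
      · refine ⟨⟨Sum.inr y, mem_hv_inr x₂ hyx⟩, Set.mem_preimage.mpr (hmemB1 y hyD hyx), ?_, ?_⟩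
        · exact (adj_H G₁ G₂ x₁ y₁ x₂ y₂).mpr ⟨hadj, fun h => hux h.1, fun h => hyx h.2⟩
        · have hdy : deg H ⟨Sum.inr y, mem_hv_inr x₂ hyx⟩ = deg G₂ y :=
            degH_inr G₁ G₂ x₁ y₁ x₂ y₂ he₁ he₂ hyx
          rw [hdu, hdy]
          exact hdeg
  have hval : Subtype.val '' (Subtype.val ⁻¹' (A ∪ B) : Set (hajosVerts (V₁ := V₁) x₂)) = A ∪ B := by
    apply Set.image_preimage_eq_of_subset
    rw [Subtype.range_coe]
    rintro w (hwA | hwB)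
    · rcases hwA with hwA | hwA
      · rcases Set.mem_insert_iff.mp hwA with h | ⟨c, _, h⟩
        · subst h; exact mem_hv_inl x₂ x₁
        · subst h; exact mem_hv_inl x₂ c
      · by_cases hx : x₁ ∈ D₁
        · rw [if_pos hx] at hwA
          rw [Set.mem_singleton_iff.mp hwA]
          exact mem_hv_inl x₂ y₁
        · rw [if_neg hx] at hwA
          exact absurd hwA (Set.notMem_empty _)
    · rcases hwB with ⟨c, ⟨_, hc⟩, h⟩ | hwB
      · subst h
        exact mem_hv_inr x₂ (by simpa using hc)
      · by_cases hx : x₂ ∈ D₂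
        · rw [if_pos hx] at hwB
          rw [Set.mem_singleton_iff.mp hwB]
          exact mem_hv_inr x₂ he₂.ne'
        · rw [if_neg hx] at hwB
          exact absurd hwB (Set.notMem_empty _)
  have hAcard : A.ncard ≤ gammaSt G₁ + 1 := by
    by_cases hx : x₁ ∈ D₁
    · rw [hA, if_pos hx, Set.insert_eq_self.mpr (Set.mem_image_of_mem _ hx)]
      calc (Sum.inl '' D₁ ∪ {Sum.inl y₁}).ncard
          ≤ (Sum.inl '' D₁).ncard + ({Sum.inl y₁} : Set (V₁ ⊕ V₂)).ncard :=
            Set.ncard_union_le _ _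
        _ = gammaSt G₁ + 1 := by
            rw [Set.ncard_image_of_injective _ Sum.inl_injective, Set.ncard_singleton, hc₁]
    · rw [hA, if_neg hx, Set.union_empty]
      calc (insert (Sum.inl x₁) (Sum.inl '' D₁)).ncard
          ≤ (Sum.inl '' D₁).ncard + 1 := Set.ncard_insert_le _ _
        _ = gammaSt G₁ + 1 := by
            rw [Set.ncard_image_of_injective _ Sum.inl_injective, hc₁]
  have hBcard : B.ncard ≤ gammaSt G₂ := by
    by_cases hx : x₂ ∈ D₂
    · rw [hB, if_pos hx]
      calc (Sum.inr '' (D₂ \ {x₂}) ∪ {Sum.inr y₂}).ncard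
          ≤ (Sum.inr '' (D₂ \ {x₂})).ncard + ({Sum.inr y₂} : Set (V₁ ⊕ V₂)).ncard :=
            Set.ncard_union_le _ _
        _ = (D₂ \ {x₂}).ncard + 1 := by
            rw [Set.ncard_image_of_injective _ Sum.inr_injective, Set.ncard_singleton]
        _ = D₂.ncard := Set.ncard_diff_singleton_add_one hx
        _ = gammaSt G₂ := hc₂
    · rw [hB, if_neg hx, Set.union_empty, Set.ncard_image_of_injective _ Sum.inr_injective,
        Set.diff_singleton_eq_self hx, hc₂]
  have hcard : (Subtype.val ⁻¹' (A ∪ B) : Set (hajosVerts (V₁ := V₁) x₂)).ncard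
      ≤ gammaSt G₁ + gammaSt G₂ + 1 := by
    have h3 : (Subtype.val ⁻¹' (A ∪ B) : Set (hajosVerts (V₁ := V₁) x₂)).ncard
        = (A ∪ B).ncard := by
      conv_rhs => rw [← hval]
      rw [Set.ncard_image_of_injective _ Subtype.val_injective]
    have h4 : (A ∪ B).ncard ≤ A.ncard + B.ncard := Set.ncard_union_le _ _
    omega
  have hle : gammaSt H ≤ (Subtype.val ⁻¹' (A ∪ B) : Set (hajosVerts (V₁ := V₁) x₂)).ncard :=
    Nat.sInf_le ⟨_, hdom, rfl⟩
  omega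
end

section
/- For the vertex-sum G = G₁ +_u G₂ +_u ⋯ +_u G_k of pairwise disjoint graphs G₁, …, G_k at vertices uᵢ ∈ V(Gᵢ), we have γ_st(G) ≤ (Σ_{i=1}^{k} γ_st(Gᵢ)) + 1. -/
/-- The vertex-sum of the disjoint graphs `G i` at the vertices `u i`:
`none` is the central vertex obtained by identifying all the `u i`. -/
def vertexSum {V : Type*} {k : ℕ} (G : Fin k → SimpleGraph V) (u : Fin k → V) :
    SimpleGraph (Option (Σ i : Fin k, {v : V // v ≠ u i})) where
  Adj a b :=
    match a, b with
    | none, none => False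
    | none, some ⟨i, v⟩ => (G i).Adj (u i) v.val
    | some ⟨i, v⟩, none => (G i).Adj (u i) v.val
    | some ⟨i, v⟩, some ⟨j, w⟩ => i = j ∧ (G i).Adj v.val w.val
  symm := by
    constructor
    intro a b h
    match a, b with
    | none, none => exact h.elim
    | none, some ⟨i, v⟩ => exact h
    | some ⟨i, v⟩, none => exact h
    | some ⟨i, v⟩, some ⟨j, w⟩ => obtain ⟨rfl, ha⟩ := h; exact ⟨rfl, ha.symm⟩
  loopless := by
    constructor
    intro a h
    match a with
    | none => exact h.elim
    | some ⟨i, v⟩ => exact (G i).irrefl h.2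

section Aux
variable {V : Type*} {k : ℕ} (G : Fin k → SimpleGraph V) (u : Fin k → V)
  (i : Fin k) (v : V) (hv : v ≠ u i)

private def vsFun (a : (vertexSum G u).neighborSet (some ⟨i, ⟨v, hv⟩⟩)) :
    (G i).neighborSet v :=
  match a with
  | ⟨none, ha⟩ => ⟨u i, (show (G i).Adj (u i) v from ha).symm⟩
  | ⟨some ⟨_, w⟩, ha⟩ => ⟨w.val, ha.2⟩

private noncomputable def vsInv (w : (G i).neighborSet v) :
    (vertexSum G u).neighborSet (some ⟨i, ⟨v, hv⟩⟩) :=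
  letI := Classical.propDecidable (w.val = u i)
  if h : w.val = u i then
    ⟨none, ((h ▸ (w.2 : (G i).Adj v w.val)) : (G i).Adj v (u i)).symm⟩
  else ⟨some ⟨i, ⟨w.val, h⟩⟩, ⟨rfl, w.2⟩⟩

private lemma vs_left_inv : Function.LeftInverse (vsInv G u i v hv) (vsFun G u i v hv) := by
  rintro ⟨a, ha⟩
  match a, ha with
  | none, ha =>
      show vsInv G u i v hv ⟨u i, _⟩ = _
      rw [vsInv]
      split
      · rfl
      · next h => exact absurd rfl h
  | some ⟨j, w⟩, ha =>
      obtain ⟨rfl, hadj⟩ := ha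
      show vsInv G u i v hv ⟨w.val, _⟩ = _
      rw [vsInv]
      split
      · next h => exact absurd h w.2
      · rfl

private lemma vs_right_inv : Function.RightInverse (vsInv G u i v hv) (vsFun G u i v hv) := by
  rintro ⟨w, hw⟩
  rw [vsInv]
  split
  · next h => exact Subtype.ext h.symm
  · rfl

lemma deg_some : deg (vertexSum G u) (some ⟨i, ⟨v, hv⟩⟩) = deg (G i) v :=
  Nat.card_congr ⟨vsFun G u i v hv, vsInv G u i v hv, vs_left_inv G u i v hv,
    vs_right_inv G u i v hv⟩

lemma deg_none [Fintype V] : deg (G i) (u i) ≤ deg (vertexSum G u) none := by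
  classical
  let f : (G i).neighborSet (u i) → (vertexSum G u).neighborSet none := fun w =>
    ⟨some ⟨i, ⟨w.val, (w.2 : (G i).Adj (u i) w.val).ne'⟩⟩,
      (w.2 : (G i).Adj (u i) w.val)⟩
  have hinj : Function.Injective f := by
    rintro ⟨a, ha⟩ ⟨b, hb⟩ h
    simp only [f, Subtype.mk.injEq, Option.some.injEq, Sigma.mk.inj_iff, heq_eq_eq,
      true_and] at h
    exact Subtype.ext (by simpa using congrArg Subtype.val h)
  exact Nat.card_le_card_of_injective f hinj

end Aux

/-- Upper bound for the strong domination number of a vertex-sum. -/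
theorem stmt10 {V : Type*} [Fintype V] {k : ℕ}
    (G : Fin k → SimpleGraph V) (u : Fin k → V) :
    gammaSt (vertexSum G u) ≤ (∑ i, gammaSt (G i)) + 1 := by
  classical
  have hex : ∀ i : Fin k, ∃ D : Set V, IsStrongDomSet (G i) D ∧ D.ncard = gammaSt (G i) := by
    intro i
    have hne : ({n | ∃ D : Set V, IsStrongDomSet (G i) D ∧ D.ncard = n}).Nonempty :=
      ⟨Set.univ.ncard, Set.univ, fun x hx => absurd (Set.mem_univ x) hx, rfl⟩
    exact Nat.sInf_mem hne
  choose D hD hcard using hex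
  set T : Set (Σ i : Fin k, {v : V // v ≠ u i}) := {p | p.2.val ∈ D p.1} with hT
  set S : Set (Option (Σ i : Fin k, {v : V // v ≠ u i})) := insert none (some '' T) with hS
  have hdom : IsStrongDomSet (vertexSum G u) S := by
    intro x hx
    match x with
    | none => exact absurd (Set.mem_insert _ _) hx
    | some ⟨i, ⟨v, hv⟩⟩ =>
      have hvD : v ∉ D i := fun hmem =>
        hx (Set.mem_insert_of_mem _ ⟨⟨i, ⟨v, hv⟩⟩, hmem, rfl⟩)
      obtain ⟨y, hyD, hadj, hdeg⟩ := hD i v hvD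
      by_cases hy : y = u i
      · refine ⟨none, Set.mem_insert _ _, ?_, ?_⟩
        · exact (show (G i).Adj v (u i) from hy ▸ hadj).symm
        · calc deg (vertexSum G u) (some ⟨i, ⟨v, hv⟩⟩) = deg (G i) v :=
                deg_some G u i v hv
            _ ≤ deg (G i) (u i) := hy ▸ hdeg
            _ ≤ deg (vertexSum G u) none := deg_none G u i
      · refine ⟨some ⟨i, ⟨y, hy⟩⟩,
          Set.mem_insert_of_mem _ ⟨⟨i, ⟨y, hy⟩⟩, hyD, rfl⟩, ⟨rfl, hadj⟩, ?_⟩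
        rw [deg_some G u i v hv, deg_some G u i y hy]
        exact hdeg
  have h1 : S.ncard ≤ (∑ i, gammaSt (G i)) + 1 := by
    haveI : ∀ i, Fintype ↥(D i) := fun i => Fintype.ofFinite _
    have h3 : T.ncard ≤ ∑ i, (D i).ncard := by
      rw [← Nat.card_coe_set_eq]
      have hinj : Function.Injective
          (fun p : T => (⟨p.1.1, ⟨p.1.2.val, p.2⟩⟩ : Σ i : Fin k, ↥(D i))) := by
        rintro ⟨⟨i₁, w₁⟩, hp⟩ ⟨⟨i₂, w₂⟩, hq⟩ h
        simp only [Sigma.mk.inj_iff] at h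
        obtain ⟨h1, h2⟩ := h
        subst h1
        rw [heq_eq_eq] at h2
        simp only [Subtype.mk.injEq] at h2
        have hw : w₁ = w₂ := Subtype.ext h2
        subst hw
        rfl
      calc Nat.card T ≤ Nat.card (Σ i : Fin k, ↥(D i)) :=
            Nat.card_le_card_of_injective _ hinj
        _ = ∑ i, Nat.card ↥(D i) := by
            simp [Nat.card_eq_fintype_card, Fintype.card_sigma]
        _ = ∑ i, (D i).ncard := by
            simp only [Nat.card_coe_set_eq]
    calc S.ncard ≤ (some '' T).ncard + 1 := Set.ncard_insert_le _ _
      _ ≤ T.ncard + 1 := by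
          have := Set.ncard_image_le (s := T)
            (f := (some : (Σ i : Fin k, {v : V // v ≠ u i}) → _)) (Set.toFinite T)
          omega
      _ ≤ (∑ i, (D i).ncard) + 1 := by omega
      _ = (∑ i, gammaSt (G i)) + 1 := by simp [hcard]
  exact le_trans (Nat.sInf_le ⟨S, hdom, rfl⟩) h1
end

section
/- Let G = G₁ +_u G₂ +_u ⋯ +_u G_k be the vertex-sum of pairwise disjoint graphs at vertices uᵢ ∈ V(Gᵢ) (central vertex u), and let S be a strong dominating set of G with u ∉ S. Then Σ_{i=1}^{k} γ_st(Gᵢ) ≤ |S| + k − 1. -/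
lemma deg_vertexSum_some {V : Type*} [Fintype V] {k : ℕ}
    (G : Fin k → SimpleGraph V) (u : Fin k → V) (i : Fin k) (v : {x : V // x ≠ u i}) :
    deg (vertexSum G u) (some ⟨i, v⟩) = deg (G i) v.val := by
  classical
  refine (Nat.card_congr (Equiv.ofBijective (f := fun x : (G i).neighborSet v.val =>
      if h : x.val = u i then
        (⟨none, show (G i).Adj (u i) v.val from (h ▸ x.2).symm⟩ :
          (vertexSum G u).neighborSet (some ⟨i, v⟩))
      else ⟨some ⟨i, ⟨x.val, h⟩⟩, ⟨rfl, x.2⟩⟩) ⟨?_, ?_⟩)).symm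
  · intro x y hxy
    beta_reduce at hxy
    by_cases hx : (x : V) = u i <;> by_cases hy : (y : V) = u i
    · exact Subtype.ext (hx.trans hy.symm)
    · rw [dif_pos hx, dif_neg hy] at hxy
      exact absurd (congrArg Subtype.val hxy) (by simp)
    · rw [dif_neg hx, dif_pos hy] at hxy
      exact absurd (congrArg Subtype.val hxy) (by simp)
    · rw [dif_neg hx, dif_neg hy] at hxy
      have h2 := congrArg Subtype.val hxy
      simp only [Option.some.injEq, Sigma.mk.inj_iff, heq_eq_eq, Subtype.mk.injEq,
        true_and] at h2
      exact Subtype.ext h2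
  · rintro ⟨a, ha⟩
    match a, ha with
    | none, ha =>
      refine ⟨⟨u i, (ha : (G i).Adj (u i) v.val).symm⟩, ?_⟩
      beta_reduce
      rw [dif_pos rfl]
    | some ⟨j, w⟩, ha =>
      obtain ⟨rfl, hadj⟩ := (ha : i = j ∧ (G i).Adj v.val w.val)
      refine ⟨⟨w.val, hadj⟩, ?_⟩
      beta_reduce
      rw [dif_neg w.2]

lemma le_deg_vertexSum_none {V : Type*} [Fintype V] {k : ℕ}
    (G : Fin k → SimpleGraph V) (u : Fin k → V) (j : Fin k) :
    deg (G j) (u j) ≤ deg (vertexSum G u) none := by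
  classical
  refine Nat.card_le_card_of_injective (fun x : (G j).neighborSet (u j) =>
    (⟨some ⟨j, ⟨x.val, x.2.ne'⟩⟩, x.2⟩ : (vertexSum G u).neighborSet none)) ?_
  intro x y hxy
  have h2 := congrArg Subtype.val hxy
  simp only [Option.some.injEq, Sigma.mk.inj_iff, heq_eq_eq, Subtype.mk.injEq,
    true_and] at h2
  exact Subtype.ext h2

/-- If `S` is a strong dominating set of the vertex-sum not containing the central vertex,
then `Σᵢ γ_st(Gᵢ) ≤ |S| + k - 1`. -/
theorem stmt14 {V : Type*} [Fintype V] {k : ℕ}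
    (G : Fin k → SimpleGraph V) (u : Fin k → V)
    (S : Set (Option (Σ i : Fin k, {v : V // v ≠ u i})))
    (hS : IsStrongDomSet (vertexSum G u) S) (hu : none ∉ S) :
    (∑ i, gammaSt (G i)) + 1 ≤ S.ncard + k := by
  classical
  set T : ∀ i : Fin k, Set {v : V // v ≠ u i} := fun i => {v | some ⟨i, v⟩ ∈ S} with hTdef
  -- cardinality decomposition
  have e : (Σ i, T i) ≃ S := by
    refine Equiv.ofBijective (fun p => ⟨some ⟨p.1, p.2.val⟩, p.2.2⟩) ⟨?_, ?_⟩
    · rintro ⟨i, x, hx⟩ ⟨i', x', hx'⟩ h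
      simp only [Subtype.mk.injEq, Option.some.injEq, Sigma.mk.inj_iff] at h
      obtain ⟨rfl, h2⟩ := h
      simp only [heq_eq_eq] at h2
      subst h2
      rfl
    · rintro ⟨a, ha⟩
      match a, ha with
      | none, ha => exact absurd ha hu
      | some ⟨i, v⟩, ha => exact ⟨⟨i, v, ha⟩, rfl⟩
  have hcard : S.ncard = ∑ i, (T i).ncard := by
    rw [← Nat.card_coe_set_eq, ← Nat.card_congr e]
    simp only [← Nat.card_coe_set_eq]
    simp [Nat.card_eq_fintype_card]
  -- key domination fact for non-central vertices
  have key : ∀ (i : Fin k) (x : V) (hxu : x ≠ u i), (some ⟨i, ⟨x, hxu⟩⟩ ∉ S) →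
      ∃ y ∈ T i, (G i).Adj x y.val ∧ deg (G i) x ≤ deg (G i) y.val := by
    intro i x hxu hxS
    obtain ⟨y, hyS, hadj, hdeg⟩ := hS _ hxS
    match y, hyS, hadj, hdeg with
    | none, hyS, _, _ => exact absurd hyS hu
    | some ⟨j, w⟩, hyS, hadj, hdeg =>
      obtain ⟨rfl, hadj'⟩ := (hadj : i = j ∧ (G i).Adj x w.val)
      refine ⟨w, hyS, hadj', ?_⟩
      rw [← deg_vertexSum_some G u i ⟨x, hxu⟩, ← deg_vertexSum_some G u i w]
      exact hdeg
  -- each T i together with u i strongly dominates G i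
  have hγ : ∀ i, gammaSt (G i) ≤ (T i).ncard + 1 := by
    intro i
    have hD : IsStrongDomSet (G i) (Subtype.val '' T i ∪ {u i}) := by
      intro x hx
      have hxu : x ≠ u i := fun h => hx (Or.inr h)
      have hxS : some ⟨i, ⟨x, hxu⟩⟩ ∉ S := fun h => hx (Or.inl ⟨⟨x, hxu⟩, h, rfl⟩)
      obtain ⟨y, hyT, hadj, hdeg⟩ := key i x hxu hxS
      exact ⟨y.val, Or.inl ⟨y, hyT, rfl⟩, hadj, hdeg⟩
    calc gammaSt (G i) ≤ (Subtype.val '' T i ∪ {u i}).ncard := Nat.sInf_le ⟨_, hD, rfl⟩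
      _ ≤ (Subtype.val '' T i).ncard + ({u i} : Set V).ncard := Set.ncard_union_le _ _
      _ = (T i).ncard + 1 := by
          rw [Set.ncard_image_of_injective _ Subtype.val_injective, Set.ncard_singleton]
  -- the branch dominating the center: strict improvement at j
  obtain ⟨y, hyS, hadjn, hdegn⟩ := hS none hu
  match y, hyS, hadjn, hdegn with
  | none, _, hadjn, _ => exact absurd hadjn (by simp [vertexSum])
  | some ⟨j, w⟩, hyS, hadjn, hdegn =>
    have hadjn' : (G j).Adj (u j) w.val := hadjn
    have hDj : IsStrongDomSet (G j) (Subtype.val '' T j) := by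
      intro x hx
      by_cases hxu : x = u j
      · subst hxu
        refine ⟨w.val, ⟨w, hyS, rfl⟩, hadjn', ?_⟩
        calc deg (G j) (u j) ≤ deg (vertexSum G u) none := le_deg_vertexSum_none G u j
          _ ≤ deg (vertexSum G u) (some ⟨j, w⟩) := hdegn
          _ = deg (G j) w.val := deg_vertexSum_some G u j w
      · have hxS : some ⟨j, ⟨x, hxu⟩⟩ ∉ S := fun h => hx ⟨⟨x, hxu⟩, h, rfl⟩
        obtain ⟨y', hyT, hadj, hdeg⟩ := key j x hxu hxS
        exact ⟨y'.val, ⟨y', hyT, rfl⟩, hadj, hdeg⟩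
    have hγj : gammaSt (G j) ≤ (T j).ncard :=
      Nat.sInf_le ⟨_, hDj, Set.ncard_image_of_injective _ Subtype.val_injective⟩
    have hsum : ∑ i, gammaSt (G i) < ∑ i, ((T i).ncard + 1) := by
      refine Finset.sum_lt_sum (fun i _ => hγ i) ⟨j, Finset.mem_univ j, ?_⟩
      exact lt_of_le_of_lt hγj (Nat.lt_succ_self _)
    have : ∑ i, ((T i).ncard + 1) = (∑ i, (T i).ncard) + k := by
      rw [Finset.sum_add_distrib]
      simp
    omega
end

section
/- There exist pairwise disjoint graphs G₁, …, G_k (for some k ≥ 2) with vertices uᵢ ∈ V(Gᵢ) such that their vertex-sum G satisfies γ_st(G) = (Σ_{i=1}^{k} γ_st(Gᵢ)) + 1; that is, the upper bound for the strong domination number of vertex-sums is tight. -/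
/-! ### Auxiliary lemmas -/

lemma deg_eq_degree {V : Type*} [Fintype V] (G : SimpleGraph V) [DecidableRel G.Adj] (v : V) :
    deg G v = G.degree v := by
  rw [deg, Nat.card_coe_set_eq, Set.ncard_eq_toFinset_card']
  simp [SimpleGraph.degree, SimpleGraph.neighborFinset]

/-- Finset version of strong domination. -/
def SDF {V : Type*} [Fintype V] [DecidableEq V] (G : SimpleGraph V) [DecidableRel G.Adj]
    (D : Finset V) : Prop :=
  ∀ x, x ∉ D → ∃ y ∈ D, G.Adj x y ∧ G.degree x ≤ G.degree y

instance {V : Type*} [Fintype V] [DecidableEq V] (G : SimpleGraph V) [DecidableRel G.Adj]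
    (D : Finset V) : Decidable (SDF G D) := by unfold SDF; infer_instance

lemma gammaSt_eq {V : Type*} [Fintype V] [DecidableEq V] (G : SimpleGraph V)
    [DecidableRel G.Adj] (m : ℕ) (D0 : Finset V) (h0 : SDF G D0) (hc : D0.card = m)
    (hlow : ∀ D : Finset V, SDF G D → m ≤ D.card) :
    gammaSt G = m := by
  have hmem : m ∈ {n | ∃ D : Set V, IsStrongDomSet G D ∧ D.ncard = n} := by
    refine ⟨↑D0, ?_, by simpa using hc⟩
    intro x hx
    obtain ⟨y, hy, ha, hd⟩ := h0 x (by simpa using hx)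
    exact ⟨y, by simpa using hy, ha, by rw [deg_eq_degree, deg_eq_degree]; exact hd⟩
  refine le_antisymm (Nat.sInf_le hmem) (le_csInf ⟨m, hmem⟩ ?_)
  rintro n ⟨D, hD, rfl⟩
  have hfin : D.Finite := Set.toFinite D
  have hsdf : SDF G hfin.toFinset := by
    intro x hx
    obtain ⟨y, hy, ha, hd⟩ := hD x (by simpa using hx)
    exact ⟨y, by simpa using hy, ha, by rw [← deg_eq_degree, ← deg_eq_degree]; exact hd⟩
  calc m ≤ hfin.toFinset.card := hlow _ hsdf
    _ = D.ncard := (Set.ncard_eq_toFinset_card D hfin).symm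

/-- The concrete example graph: on `Fin 4`, vertex `0` adjacent to all others,
plus the edge `{1, 2}`. -/
def H4 : SimpleGraph (Fin 4) where
  Adj a b := a ≠ b ∧ (a = 0 ∨ b = 0 ∨ (a = 1 ∧ b = 2) ∨ (a = 2 ∧ b = 1))
  symm := ⟨fun a b h => ⟨fun e => h.1 e.symm, by tauto⟩⟩
  loopless := ⟨fun a h => h.1 rfl⟩

instance : DecidableRel H4.Adj := fun a b =>
  inferInstanceAs (Decidable (a ≠ b ∧ (a = 0 ∨ b = 0 ∨ (a = 1 ∧ b = 2) ∨ (a = 2 ∧ b = 1))))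

instance {V : Type*} {k : ℕ} (G : Fin k → SimpleGraph V) (u : Fin k → V)
    [∀ i, DecidableRel (G i).Adj] : DecidableRel (vertexSum G u).Adj
  | none, none => .isFalse id
  | none, some ⟨i, v⟩ => inferInstanceAs (Decidable ((G i).Adj (u i) v.val))
  | some ⟨i, v⟩, none => inferInstanceAs (Decidable ((G i).Adj (u i) v.val))
  | some ⟨i, v⟩, some ⟨j, w⟩ => inferInstanceAs (Decidable (i = j ∧ (G i).Adj v.val w.val))

/-- The concrete strong dominating set of the vertex-sum of two copies of `H4`. -/
def D7 : Finset (Option (Σ i : Fin 2, {v : Fin 4 // v ≠ (1 : Fin 4)})) :=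
  {none, some ⟨0, ⟨0, by decide⟩⟩, some ⟨1, ⟨0, by decide⟩⟩}

set_option maxRecDepth 100000 in
/-- The upper bound for the strong domination number of vertex-sums is tight. -/
theorem stmt17 :
    ∃ (k : ℕ), 2 ≤ k ∧ ∃ (n : ℕ) (G : Fin k → SimpleGraph (Fin n)) (u : Fin k → Fin n),
      gammaSt (vertexSum G u) = (∑ i, gammaSt (G i)) + 1 := by
  refine ⟨2, le_refl 2, 4, (fun _ => H4), (fun _ => 1), ?_⟩
  have h1 : gammaSt H4 = 1 :=
    gammaSt_eq H4 1 {0} (by decide) (by decide) (by decide)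
  have h2 : gammaSt (vertexSum (fun _ : Fin 2 => H4) (fun _ => 1)) = 3 :=
    gammaSt_eq _ 3 D7 (by decide) (by decide) (by decide)
  rw [h2]
  simp [h1]
end
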